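/- The function f(p) = (2E(p) - K(p))/sqrt(1 - 2p^2) is strictly monotonically increasing on the interval (0, 1/√2), where K and E are the complete elliptic integrals of the first and second kind. -/

import Mathlib

open Real

/-- Complete elliptic integral of the first kind with modulus `p`. -/
noncomputable def ellK (p : ℝ) : ℝ :=
  ∫ θ in (0:ℝ)..(π/2), 1 / Real.sqrt (1 - p^2 * Real.sin θ ^ 2)

/-- Complete elliptic integral of the second kind with modulus `p`. -/
noncomputable def ellE (p : ℝ) : ℝ :=
  ∫ θ in (0:ℝ)..(π/2), Real.sqrt (1 - p^2 * Real.sin θ ^ 2)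

/-- The function `f(p) = (2E(p) - K(p))/√(1 - 2p²)`. -/
noncomputable def fElastic (p : ℝ) : ℝ :=
  (2 * ellE p - ellK p) / Real.sqrt (1 - 2 * p^2)

/-!
With `x = p²` and `u = sin² θ`, the integrand of `(2E - K)/√(1 - 2x)` is
`k(x, u) = (1 - 2xu)/√((1 - 2x)(1 - xu))`. This is not increasing in `x` for every `u`, but since
`θ ↦ π/2 - θ` swaps `sin² θ` and `1 - sin² θ`, twice the integral is the integral of
`k(x, u) + k(x, 1 - u)`, whose `x`-derivative is positive on `[0, 1/2)`.
-/

open Set intervalIntegral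

noncomputable section

def elasticRadicand (x u : ℝ) : ℝ := (1 - 2 * x) * (1 - x * u)

def elasticKernel (x u : ℝ) : ℝ := (1 - 2 * x * u) / √(elasticRadicand x u)

def elasticKernelDeriv (x u : ℝ) : ℝ :=
  (2 - 3 * u + 2 * x * u ^ 2) / (2 * elasticRadicand x u * √(elasticRadicand x u))

def elasticIntegral (x : ℝ) : ℝ := ∫ θ in (0 : ℝ)..(π / 2), elasticKernel x (sin θ ^ 2)

end

lemma elasticRadicand_pos {x u : ℝ} (hx0 : 0 ≤ x) (hx : x < 1 / 2) (hu : u ≤ 1) :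
    0 < elasticRadicand x u :=
  mul_pos (by linarith) (by nlinarith)

lemma hasDerivAt_elasticKernel {x u : ℝ} (hr : 0 < elasticRadicand x u) :
    HasDerivAt (fun y ↦ elasticKernel y u) (elasticKernelDeriv x u) x := by
  have hr' : HasDerivAt (fun y ↦ elasticRadicand y u) (-2 * (1 - x * u) + (1 - 2 * x) * -u) x :=
    ((((hasDerivAt_id x).const_mul 2).const_sub 1).congr_deriv (by simp)).mul
      ((((hasDerivAt_id x).mul_const u).const_sub 1).congr_deriv (by simp))
  have hnum : HasDerivAt (fun y ↦ 1 - 2 * y * u) (-(2 * u)) x :=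
    (((hasDerivAt_id x).const_mul 2).mul_const u).const_sub 1 |>.congr_deriv (by simp)
  have hsqrt_ne : √(elasticRadicand x u) ≠ 0 := (sqrt_pos.2 hr).ne'
  have h : HasDerivAt (fun y ↦ elasticKernel y u) _ x := hnum.div (hr'.sqrt hr.ne') hsqrt_ne
  refine h.congr_deriv ?_
  have hsq : √(elasticRadicand x u) ^ 2 = elasticRadicand x u := sq_sqrt hr.le
  unfold elasticKernelDeriv
  field_simp
  rw [hsq, elasticRadicand]
  ring

lemma elasticPoly_pos {x t : ℝ} (hx0 : 0 ≤ x) (hx : x ≤ 1 / 2) (ht0 : 0 ≤ t) (ht : t ≤ 1) :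
    0 < (2 - 3 * t + 2 * x * t ^ 2) * (1 - x * (1 - t)) ^ 2
      + (-1 + 3 * t + 2 * x * (1 - t) ^ 2) * (1 - x * t) ^ 2 := by
  have h : 0 ≤ x * (t * (1 - t)) := mul_nonneg hx0 (mul_nonneg ht0 (by linarith))
  nlinarith [mul_nonneg h (by linarith : (0 : ℝ) ≤ 8 - 11 * x),
    mul_nonneg hx0 (sq_nonneg (x * t * (1 - t))), sq_nonneg (x - 1 / 2)]

-- With `a = s²`, `b = r²` and `r ≤ s`: `s (A r³ + B s³) ≥ A r⁴ + B s⁴ > 0`.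
lemma div_mul_sqrt_add_div_mul_sqrt_pos {a b A B : ℝ} (hb : 0 < b) (hba : b ≤ a) (hA : 0 ≤ A)
    (h : 0 < A * b ^ 2 + B * a ^ 2) : 0 < A / (a * √a) + B / (b * √b) := by
  obtain ⟨s, hs, rfl⟩ : ∃ s, 0 < s ∧ a = s ^ 2 :=
    ⟨√a, sqrt_pos.2 (by linarith), (sq_sqrt (by linarith)).symm⟩
  obtain ⟨r, hr, rfl⟩ : ∃ r, 0 < r ∧ b = r ^ 2 := ⟨√b, sqrt_pos.2 hb, (sq_sqrt hb.le).symm⟩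
  have hrs : r ≤ s := (pow_le_pow_iff_left₀ hr.le hs.le two_ne_zero).1 hba
  rw [sqrt_sq hs.le, sqrt_sq hr.le]
  have hcubic : 0 < A * r ^ 3 + B * s ^ 3 := by
    have : A * r ^ 4 ≤ A * r ^ 3 * s := by
      rw [pow_succ, ← mul_assoc]; gcongr
    nlinarith
  have : A / (s ^ 2 * s) + B / (r ^ 2 * r) = (A * r ^ 3 + B * s ^ 3) / (s ^ 3 * r ^ 3) := by
    field_simp
  rw [this]
  positivity

lemma elasticKernelDeriv_add_pos_of_le_half {x t : ℝ} (hx0 : 0 ≤ x) (hx : x < 1 / 2)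
    (ht0 : 0 ≤ t) (ht : t ≤ 1 / 2) : 0 < elasticKernelDeriv x t + elasticKernelDeriv x (1 - t) := by
  have hb : 0 < elasticRadicand x (1 - t) := elasticRadicand_pos hx0 hx (by linarith)
  have hba : elasticRadicand x (1 - t) ≤ elasticRadicand x t := by
    unfold elasticRadicand
    nlinarith [mul_le_mul_of_nonneg_left (by linarith : t ≤ 1 - t) hx0]
  have hA : 0 ≤ 2 - 3 * t + 2 * x * t ^ 2 := by nlinarith
  have hnum : 0 < (2 - 3 * t + 2 * x * t ^ 2) * elasticRadicand x (1 - t) ^ 2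
      + (2 - 3 * (1 - t) + 2 * x * (1 - t) ^ 2) * elasticRadicand x t ^ 2 := by
    have h2x : 0 < 1 - 2 * x := by linarith
    have := mul_pos (pow_pos h2x 2) (elasticPoly_pos hx0 hx.le ht0 (by linarith))
    unfold elasticRadicand
    linear_combination this
  have hsum : elasticKernelDeriv x t + elasticKernelDeriv x (1 - t) =
      ((2 - 3 * t + 2 * x * t ^ 2) / (elasticRadicand x t * √(elasticRadicand x t))
        + (2 - 3 * (1 - t) + 2 * x * (1 - t) ^ 2)
          / (elasticRadicand x (1 - t) * √(elasticRadicand x (1 - t)))) / 2 := by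
    unfold elasticKernelDeriv
    ring
  rw [hsum]
  exact half_pos (div_mul_sqrt_add_div_mul_sqrt_pos hb hba hA hnum)

lemma elasticKernelDeriv_add_pos {x t : ℝ} (hx0 : 0 ≤ x) (hx : x < 1 / 2) (ht0 : 0 ≤ t)
    (ht : t ≤ 1) : 0 < elasticKernelDeriv x t + elasticKernelDeriv x (1 - t) := by
  rcases le_total t (1 / 2) with h | h
  · exact elasticKernelDeriv_add_pos_of_le_half hx0 hx ht0 h
  · simpa [add_comm] using
      elasticKernelDeriv_add_pos_of_le_half hx0 hx (t := 1 - t) (by linarith) (by linarith)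

lemma strictMonoOn_elasticKernel_add {t : ℝ} (ht0 : 0 ≤ t) (ht : t ≤ 1) :
    StrictMonoOn (fun x ↦ elasticKernel x t + elasticKernel x (1 - t)) (Ico 0 (1 / 2)) := by
  have hderiv : ∀ x ∈ Ico (0 : ℝ) (1 / 2), HasDerivAt
      (fun x ↦ elasticKernel x t + elasticKernel x (1 - t))
      (elasticKernelDeriv x t + elasticKernelDeriv x (1 - t)) x := fun x hx ↦
    (hasDerivAt_elasticKernel (elasticRadicand_pos hx.1 hx.2 ht)).add
      (hasDerivAt_elasticKernel (elasticRadicand_pos hx.1 hx.2 (by linarith)))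
  refine strictMonoOn_of_deriv_pos (convex_Ico 0 (1 / 2))
    (fun x hx ↦ (hderiv x hx).continuousAt.continuousWithinAt) fun x hx ↦ ?_
  rw [interior_Ico] at hx
  rw [(hderiv x (Ioo_subset_Ico_self hx)).deriv]
  exact elasticKernelDeriv_add_pos hx.1.le hx.2 ht0 ht

lemma continuous_elasticKernel_comp {x : ℝ} (hx0 : 0 ≤ x) (hx : x < 1 / 2) {u : ℝ → ℝ}
    (hu : Continuous u) (hu1 : ∀ θ, u θ ≤ 1) : Continuous fun θ ↦ elasticKernel x (u θ) := by
  unfold elasticKernel elasticRadicand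
  exact (by fun_prop : Continuous _).div (by fun_prop)
    fun θ ↦ (sqrt_pos.2 (elasticRadicand_pos hx0 hx (hu1 θ))).ne'

lemma integral_comp_sin_sq_eq_integral_comp_cos_sq (g : ℝ → ℝ) :
    ∫ θ in (0 : ℝ)..(π / 2), g (sin θ ^ 2) = ∫ θ in (0 : ℝ)..(π / 2), g (cos θ ^ 2) := by
  simpa [sin_pi_div_two_sub] using (integral_comp_sub_left (fun θ ↦ g (sin θ ^ 2)) (π / 2)
    (a := 0) (b := π / 2)).symm

lemma two_mul_elasticIntegral {x : ℝ} (hx0 : 0 ≤ x) (hx : x < 1 / 2) :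
    2 * elasticIntegral x = ∫ θ in (0 : ℝ)..(π / 2),
      (elasticKernel x (sin θ ^ 2) + elasticKernel x (1 - sin θ ^ 2)) := by
  rw [integral_add ((continuous_elasticKernel_comp hx0 hx (by fun_prop) sin_sq_le_one).intervalIntegrable _ _)
    ((continuous_elasticKernel_comp hx0 hx (by fun_prop)
      fun θ ↦ by linarith [sq_nonneg (sin θ)]).intervalIntegrable _ _)]
  simp only [← cos_sq', ← integral_comp_sin_sq_eq_integral_comp_cos_sq, elasticIntegral]
  ring

lemma strictMonoOn_elasticIntegral : StrictMonoOn elasticIntegral (Ico 0 (1 / 2)) := by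
  intro x hx y hy hxy
  have hcont : ∀ z ∈ Ico (0 : ℝ) (1 / 2), Continuous fun θ ↦
      elasticKernel z (sin θ ^ 2) + elasticKernel z (1 - sin θ ^ 2) := fun z hz ↦
    (continuous_elasticKernel_comp hz.1 hz.2 (by fun_prop) sin_sq_le_one).add
      (continuous_elasticKernel_comp hz.1 hz.2 (by fun_prop) fun θ ↦ by linarith [sq_nonneg (sin θ)])
  have hmono : ∀ θ, elasticKernel x (sin θ ^ 2) + elasticKernel x (1 - sin θ ^ 2)
      < elasticKernel y (sin θ ^ 2) + elasticKernel y (1 - sin θ ^ 2) := fun θ ↦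
    strictMonoOn_elasticKernel_add (sq_nonneg _) (sin_sq_le_one θ) hx hy hxy
  suffices 2 * elasticIntegral x < 2 * elasticIntegral y by linarith
  rw [two_mul_elasticIntegral hx.1 hx.2, two_mul_elasticIntegral hy.1 hy.2]
  exact integral_lt_integral_of_continuousOn_of_le_of_exists_lt (by positivity)
    (hcont x hx).continuousOn (hcont y hy).continuousOn (fun θ _ ↦ (hmono θ).le)
    ⟨0, ⟨le_rfl, by positivity⟩, hmono 0⟩

lemma fElastic_eq_elasticIntegral {p : ℝ} (hp : p ^ 2 < 1 / 2) :
    fElastic p = elasticIntegral (p ^ 2) := by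
  have hr : ∀ θ, 0 < 1 - p ^ 2 * sin θ ^ 2 := fun θ ↦ by
    nlinarith [sin_sq_le_one θ, sq_nonneg (sin θ), sq_nonneg p]
  have hc : Continuous fun θ ↦ √(1 - p ^ 2 * sin θ ^ 2) := by fun_prop
  have hc' : Continuous fun θ ↦ 1 / √(1 - p ^ 2 * sin θ ^ 2) :=
    continuous_const.div hc fun θ ↦ (sqrt_pos.2 (hr θ)).ne'
  rw [fElastic, ellE, ellK, ← integral_const_mul,
    ← integral_sub (f := fun θ ↦ 2 * √(1 - p ^ 2 * sin θ ^ 2)) ((continuous_const.mul hc).intervalIntegrable _ _) (hc'.intervalIntegrable _ _),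
    ← intervalIntegral.integral_div]
  refine integral_congr fun θ _ ↦ ?_
  have hsq : √(1 - p ^ 2 * sin θ ^ 2) ^ 2 = 1 - p ^ 2 * sin θ ^ 2 := sq_sqrt (hr θ).le
  have h2p : 0 < 1 - 2 * p ^ 2 := by linarith
  simp only [elasticKernel, elasticRadicand]
  rw [sqrt_mul h2p.le]
  field_simp
  rw [hsq]
  ring

theorem fElastic_strictMonoOn :
    StrictMonoOn fElastic (Set.Ioo 0 (1 / Real.sqrt 2)) := by
  have hsq : MapsTo (· ^ 2) (Ioo 0 (1 / √2)) (Ico 0 (1 / 2)) := fun p hp ↦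
    ⟨sq_nonneg p, by simpa [div_pow] using pow_lt_pow_left₀ hp.2 hp.1.le two_ne_zero⟩
  refine (strictMonoOn_elasticIntegral.comp
    (fun p hp q _ hpq ↦ pow_lt_pow_left₀ hpq hp.1.le two_ne_zero) hsq).congr fun p hp ↦ ?_
  exact (fElastic_eq_elasticIntegral (hsq hp).2).symm
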